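/- arXiv:2408.16244 — 2 statements merged into one kernel-verified Lean document; each statement's English description precedes it below -/
import Mathlib

section
/- Let O be a d×d Hermitian matrix with d ≥ 2 and set O₀ = O − (tr(O)/d)I. Then for every density matrix σ (Hermitian, positive semidefinite, trace 1), the DDB shadow variance of O₀ at σ is at most 2d·tr(O₀²). Explicitly: 4d∑_k tr(σP_k)·tr²(oP_k) + 2d∑_{0≤j<k≤d−1}∑_±[tr(σP^±_{jk})tr²(oP^±_{jk}) + tr(σQ^±_{jk})tr²(oQ^±_{jk})] ≤ 2d·tr(O₀²), where o = O₀ − ((d−1)/d)∑_k tr(O₀P_k)P_k. -/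
open Matrix Complex BigOperators
open scoped ComplexOrder

noncomputable section

/-- computational basis vector `|t⟩` in `ℂ^d`. -/
def ket (d : ℕ) (t : Fin d) : Fin d → ℂ := fun i => if i = t then 1 else 0

/-- rank-one projector `|v⟩⟨v|`. -/
def proj {d : ℕ} (v : Fin d → ℂ) : Matrix (Fin d) (Fin d) ℂ := Matrix.vecMulVec v (star v)

/-- `P_t = |t⟩⟨t|`. -/
def Pk {d : ℕ} (t : Fin d) : Matrix (Fin d) (Fin d) ℂ := proj (ket d t)

def phiP {d : ℕ} (j k : Fin d) : Fin d → ℂ := fun i => (ket d j i + ket d k i) / ((Real.sqrt 2 : ℝ) : ℂ)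
def phiM {d : ℕ} (j k : Fin d) : Fin d → ℂ := fun i => (ket d j i - ket d k i) / ((Real.sqrt 2 : ℝ) : ℂ)
def psiP {d : ℕ} (j k : Fin d) : Fin d → ℂ := fun i => (ket d j i + Complex.I * ket d k i) / ((Real.sqrt 2 : ℝ) : ℂ)
def psiM {d : ℕ} (j k : Fin d) : Fin d → ℂ := fun i => (ket d j i - Complex.I * ket d k i) / ((Real.sqrt 2 : ℝ) : ℂ)

/-- the DDB snapshot projectors. -/
def SDDB (d : ℕ) : Set (Matrix (Fin d) (Fin d) ℂ) :=
  {M | (∃ t, M = Pk t) ∨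
    ∃ j k : Fin d, j < k ∧
      (M = proj (phiP j k) ∨ M = proj (phiM j k) ∨ M = proj (psiP j k) ∨ M = proj (psiM j k))}

/-- the DDB states (as vectors). -/
def ddbStates (d : ℕ) : Set (Fin d → ℂ) :=
  {v | (∃ t, v = ket d t) ∨
    ∃ j k : Fin d, j ≠ k ∧
      (v = phiP j k ∨ v = phiM j k ∨ v = psiP j k ∨ v = psiM j k)}

/-- the DDB measurement channel `M`. -/
def Mchan {d : ℕ} (ρ : Matrix (Fin d) (Fin d) ℂ) : Matrix (Fin d) (Fin d) ℂ :=
  ((1 : ℂ) / (2 * d)) • (ρ + (Matrix.trace ρ) • (1 : Matrix (Fin d) (Fin d) ℂ)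
      + ((d : ℂ) - 1) • ∑ k, ρ k k • Pk k)

/-- the inverse reconstruction channel `M⁻¹`. -/
def Minv {d : ℕ} (ρ : Matrix (Fin d) (Fin d) ℂ) : Matrix (Fin d) (Fin d) ℂ :=
  (2 * (d : ℂ)) • (ρ - (((d : ℂ) - 1) / d) • ∑ k, (Matrix.trace (ρ * Pk k)) • Pk k)
    - ((Matrix.trace ρ) / d) • (1 : Matrix (Fin d) (Fin d) ℂ)

lemma trace_mul_proj {d : ℕ} (M : Matrix (Fin d) (Fin d) ℂ) (v : Fin d → ℂ) :
    Matrix.trace (M * proj v) = star v ⬝ᵥ (M *ᵥ v) := by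
  simp only [Matrix.trace, proj, Matrix.mul_apply, Matrix.vecMulVec_apply, dotProduct,
    Matrix.mulVec, Matrix.diag_apply, Pi.star_apply, Finset.mul_sum]
  congr 1; ext i; congr 1; ext j; ring

lemma quad {d : ℕ} (M : Matrix (Fin d) (Fin d) ℂ) (j k : Fin d) (α β : ℂ) :
    star (fun i => α * ket d j i + β * ket d k i) ⬝ᵥ (M *ᵥ fun i => α * ket d j i + β * ket d k i)
      = (starRingEnd ℂ) α * α * M j j + (starRingEnd ℂ) α * β * M j k
        + (starRingEnd ℂ) β * α * M k j + (starRingEnd ℂ) β * β * M k k := by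
  simp [ket, dotProduct, Matrix.mulVec, mul_add, add_mul, Finset.sum_add_distrib,
    mul_ite, ite_mul, Finset.sum_ite_eq', Pi.star_apply, star_add, star_mul',
    apply_ite (starRingEnd ℂ)]
  ring

lemma sqrt2_mul_self : ((Real.sqrt 2 : ℝ) : ℂ) * ((Real.sqrt 2 : ℝ) : ℂ) = 2 := by
  norm_cast; exact Real.mul_self_sqrt (by norm_num)

lemma tr_Pk {d : ℕ} (M : Matrix (Fin d) (Fin d) ℂ) (t : Fin d) :
    Matrix.trace (M * Pk t) = M t t := by
  rw [Pk, trace_mul_proj]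
  simp [ket, dotProduct, Matrix.mulVec, mul_ite, ite_mul, Finset.sum_ite_eq',
    apply_ite (starRingEnd ℂ)]

lemma tr_phiP {d : ℕ} (M : Matrix (Fin d) (Fin d) ℂ) (j k : Fin d) :
    Matrix.trace (M * proj (phiP j k)) = (M j j + M j k + M k j + M k k) / 2 := by
  rw [trace_mul_proj]
  have hv : phiP j k = fun i => (1 / ((Real.sqrt 2 : ℝ) : ℂ)) * ket d j i
      + (1 / ((Real.sqrt 2 : ℝ) : ℂ)) * ket d k i := by
    funext i; simp [phiP]; ring
  rw [hv, quad]
  have hc : (starRingEnd ℂ) (1 / ((Real.sqrt 2 : ℝ) : ℂ)) = 1 / ((Real.sqrt 2 : ℝ) : ℂ) := by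
    simp [Complex.conj_ofReal]
  have hm : (1 / ((Real.sqrt 2 : ℝ) : ℂ)) * (1 / ((Real.sqrt 2 : ℝ) : ℂ)) = 1 / 2 := by
    rw [div_mul_div_comm, sqrt2_mul_self]; norm_num
  rw [hc]
  field_simp [hm]
  rw [sq (((Real.sqrt 2 : ℝ) : ℂ)), sqrt2_mul_self]
  ring

lemma tr_phiM {d : ℕ} (M : Matrix (Fin d) (Fin d) ℂ) (j k : Fin d) :
    Matrix.trace (M * proj (phiM j k)) = (M j j - M j k - M k j + M k k) / 2 := by
  rw [trace_mul_proj]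
  have hv : phiM j k = fun i => (1 / ((Real.sqrt 2 : ℝ) : ℂ)) * ket d j i
      + (-(1 / ((Real.sqrt 2 : ℝ) : ℂ))) * ket d k i := by
    funext i; simp [phiM]; ring
  rw [hv, quad]
  have hc : (starRingEnd ℂ) (1 / ((Real.sqrt 2 : ℝ) : ℂ)) = 1 / ((Real.sqrt 2 : ℝ) : ℂ) := by
    simp [Complex.conj_ofReal]
  simp only [map_neg, hc]
  field_simp
  rw [sq (((Real.sqrt 2 : ℝ) : ℂ)), sqrt2_mul_self]
  ring

lemma tr_psiP {d : ℕ} (M : Matrix (Fin d) (Fin d) ℂ) (j k : Fin d) :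
    Matrix.trace (M * proj (psiP j k)) = (M j j + Complex.I * M j k - Complex.I * M k j + M k k) / 2 := by
  rw [trace_mul_proj]
  have hv : psiP j k = fun i => (1 / ((Real.sqrt 2 : ℝ) : ℂ)) * ket d j i
      + (Complex.I / ((Real.sqrt 2 : ℝ) : ℂ)) * ket d k i := by
    funext i; simp [psiP]; ring
  rw [hv, quad]
  have hc : (starRingEnd ℂ) (1 / ((Real.sqrt 2 : ℝ) : ℂ)) = 1 / ((Real.sqrt 2 : ℝ) : ℂ) := by
    simp [Complex.conj_ofReal]
  have hc2 : (starRingEnd ℂ) (Complex.I / ((Real.sqrt 2 : ℝ) : ℂ)) = -Complex.I / ((Real.sqrt 2 : ℝ) : ℂ) := by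
    simp [Complex.conj_ofReal, map_div₀, Complex.conj_I, neg_div]
  rw [hc, hc2]
  have h2 : ((Real.sqrt 2 : ℝ) : ℂ) ≠ 0 := by
    norm_cast; positivity
  field_simp
  rw [sq (((Real.sqrt 2 : ℝ) : ℂ)), sqrt2_mul_self, Complex.I_sq]
  ring

lemma tr_psiM {d : ℕ} (M : Matrix (Fin d) (Fin d) ℂ) (j k : Fin d) :
    Matrix.trace (M * proj (psiM j k)) = (M j j - Complex.I * M j k + Complex.I * M k j + M k k) / 2 := by
  rw [trace_mul_proj]
  have hv : psiM j k = fun i => (1 / ((Real.sqrt 2 : ℝ) : ℂ)) * ket d j i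
      + (-(Complex.I / ((Real.sqrt 2 : ℝ) : ℂ))) * ket d k i := by
    funext i; simp [psiM]; ring
  rw [hv, quad]
  have hc : (starRingEnd ℂ) (1 / ((Real.sqrt 2 : ℝ) : ℂ)) = 1 / ((Real.sqrt 2 : ℝ) : ℂ) := by
    simp [Complex.conj_ofReal]
  have hc2 : (starRingEnd ℂ) (Complex.I / ((Real.sqrt 2 : ℝ) : ℂ)) = -Complex.I / ((Real.sqrt 2 : ℝ) : ℂ) := by
    simp [Complex.conj_ofReal, map_div₀, Complex.conj_I, neg_div]
  rw [map_neg, hc, hc2]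
  have h2 : ((Real.sqrt 2 : ℝ) : ℂ) ≠ 0 := by
    norm_cast; positivity
  field_simp
  rw [sq (((Real.sqrt 2 : ℝ) : ℂ)), sqrt2_mul_self, Complex.I_sq]
  ring
lemma re_div_nat (z : ℂ) (n : ℕ) : (z / (n : ℂ)).re = z.re / n := by
  rw [show ((n : ℂ)) = ((n : ℝ) : ℂ) by push_cast; ring, Complex.div_ofReal_re]

lemma re_div_two (z : ℂ) : (z / (2 : ℂ)).re = z.re / 2 := by
  rw [show ((2 : ℂ)) = ((2 : ℝ) : ℂ) by norm_num, Complex.div_ofReal_re]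

lemma sum_split {d : ℕ} (g : Fin d × Fin d → ℝ) (hg : ∀ j k : Fin d, g (k, j) = g (j, k)) :
    ∑ p : Fin d × Fin d, g p
      = (∑ t, g (t, t)) + 2 * ∑ p ∈ Finset.univ.filter (fun p : Fin d × Fin d => p.1 < p.2), g p := by
  classical
  rw [← Finset.sum_filter_add_sum_filter_not Finset.univ (fun p : Fin d × Fin d => p.1 = p.2)]
  have hdiag : ∑ p ∈ Finset.univ.filter (fun p : Fin d × Fin d => p.1 = p.2), g p
      = ∑ t, g (t, t) := by
    refine Finset.sum_nbij' (fun p => p.1) (fun t => (t, t)) ?_ ?_ ?_ ?_ ?_ <;>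
      simp +contextual [Prod.ext_iff, eq_comm]
  have hoff : Finset.univ.filter (fun p : Fin d × Fin d => ¬ p.1 = p.2)
      = Finset.univ.filter (fun p : Fin d × Fin d => p.1 < p.2)
        ∪ Finset.univ.filter (fun p : Fin d × Fin d => p.2 < p.1) := by
    ext p
    simp only [Finset.mem_filter, Finset.mem_union, Finset.mem_univ, true_and]
    constructor
    · exact fun h => lt_or_gt_of_ne h
    · rintro (h | h) <;> [exact ne_of_lt h; exact (ne_of_lt h).symm]
  have hdisj : Disjoint (Finset.univ.filter (fun p : Fin d × Fin d => p.1 < p.2))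
      (Finset.univ.filter (fun p : Fin d × Fin d => p.2 < p.1)) := by
    rw [Finset.disjoint_filter]
    intro p _ h1
    exact not_lt_of_gt h1
  have hswap : ∑ p ∈ Finset.univ.filter (fun p : Fin d × Fin d => p.2 < p.1), g p
      = ∑ p ∈ Finset.univ.filter (fun p : Fin d × Fin d => p.1 < p.2), g p := by
    refine Finset.sum_nbij' Prod.swap Prod.swap ?_ ?_ ?_ ?_ ?_ <;>
      simp +contextual [Prod.ext_iff]
    intro a b _; exact hg b a
  rw [hoff, Finset.sum_union hdisj, hswap, hdiag]
  ring


theorem stmt10 (d : ℕ) (hd : 2 ≤ d) (O O₀ o σ : Matrix (Fin d) (Fin d) ℂ)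
    (hO : O.IsHermitian)
    (hO₀ : O₀ = O - (Matrix.trace O / d) • (1 : Matrix (Fin d) (Fin d) ℂ))
    (ho : o = O₀ - (((d : ℂ) - 1) / d) • ∑ t, (Matrix.trace (O₀ * Pk t)) • Pk t)
    (hσ : σ.PosSemidef) (hσtr : Matrix.trace σ = 1) :
    4 * (d : ℝ) * (∑ t, (Matrix.trace (σ * Pk t)).re * ((Matrix.trace (o * Pk t)).re)^2)
      + 2 * (d : ℝ) * (∑ p ∈ Finset.univ.filter (fun p : Fin d × Fin d => p.1 < p.2),
          ((Matrix.trace (σ * proj (phiP p.1 p.2))).re * ((Matrix.trace (o * proj (phiP p.1 p.2))).re)^2 + (Matrix.trace (σ * proj (phiM p.1 p.2))).re * ((Matrix.trace (o * proj (phiM p.1 p.2))).re)^2 + (Matrix.trace (σ * proj (psiP p.1 p.2))).re * ((Matrix.trace (o * proj (psiP p.1 p.2))).re)^2 + (Matrix.trace (σ * proj (psiM p.1 p.2))).re * ((Matrix.trace (o * proj (psiM p.1 p.2))).re)^2))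
    ≤ 2 * (d : ℝ) * (Matrix.trace (O₀ * O₀)).re := by
  classical
  have hd0 : (d : ℂ) ≠ 0 := by positivity
  have hdR : (2:ℝ) ≤ (d : ℝ) := by exact_mod_cast hd
  have hdR0 : (0:ℝ) < (d : ℝ) := by linarith
  set dR : ℝ := (d : ℝ) with hdRdef
  -- O₀ Hermitian
  have htrO : (starRingEnd ℂ) (Matrix.trace O) = Matrix.trace O := by
    rw [show (starRingEnd ℂ) (Matrix.trace O) = star (Matrix.trace O) from rfl,
      ← Matrix.trace_conjTranspose, hO.eq]
  have hH : O₀.IsHermitian := by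
    rw [hO₀]
    refine Matrix.IsHermitian.sub hO ?_
    rw [Matrix.IsHermitian, Matrix.conjTranspose_smul, Matrix.conjTranspose_one]
    rw [RCLike.star_def, map_div₀, htrO, Complex.conj_natCast]
  have hconj : ∀ j k, O₀ k j = (starRingEnd ℂ) (O₀ j k) := by
    intro j k
    conv_lhs => rw [← hH.eq]
    simp [Matrix.conjTranspose_apply]
  -- entries of o
  have hsumPk : ∀ j k : Fin d, (∑ t, (Matrix.trace (O₀ * Pk t)) • Pk t) j k
      = if j = k then O₀ j j else 0 := by
    intro j k
    rw [Matrix.sum_apply]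
    simp only [Matrix.smul_apply, tr_Pk, smul_eq_mul]
    simp only [Pk, proj, Matrix.vecMulVec_apply, ket, Pi.star_apply]
    rw [Finset.sum_eq_single j]
    · by_cases h : j = k <;> simp [h, eq_comm]
    · intro t _ ht; simp [Ne.symm ht]
    · simp
  have hentry : ∀ j k, o j k = O₀ j k - ((d:ℂ)-1)/d * (if j = k then O₀ j j else 0) := by
    intro j k
    rw [ho]
    rw [Matrix.sub_apply, Matrix.smul_apply, hsumPk, smul_eq_mul]
  have ho_diag : ∀ t, o t t = O₀ t t / d := by
    intro t; rw [hentry]; simp; field_simp; ring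
  have ho_off : ∀ j k, j ≠ k → o j k = O₀ j k := by
    intro j k h; rw [hentry]; simp [h]
  -- σ facts
  have hnn : ∀ v : Fin d → ℂ, 0 ≤ (Matrix.trace (σ * proj v)).re := by
    intro v
    rw [trace_mul_proj]
    have := hσ.dotProduct_mulVec_nonneg v
    rw [Complex.le_def] at this
    simpa using this.1
  have hdiagnn : ∀ t, 0 ≤ (σ t t).re := by
    intro t
    have := hnn (ket d t)
    rwa [show proj (ket d t) = Pk t from rfl, tr_Pk] at this
  have hsum1 : ∑ t, (σ t t).re = 1 := by
    have : (Matrix.trace σ).re = 1 := by rw [hσtr]; simp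
    rw [← this, Matrix.trace, Complex.re_sum]
    rfl
  have hpair1 : ∀ j k : Fin d, j ≠ k → (σ j j).re + (σ k k).re ≤ 1 := by
    intro j k hjk
    have h2 : ∑ t ∈ ({j, k} : Finset (Fin d)), (σ t t).re ≤ ∑ t, (σ t t).re :=
      Finset.sum_le_sum_of_subset_of_nonneg (Finset.subset_univ _) (fun t _ _ => hdiagnn t)
    rw [Finset.sum_pair hjk, hsum1] at h2
    exact h2
  have hdiag1 : ∀ t, (σ t t).re ≤ 1 := by
    intro t
    rw [← hsum1]
    exact Finset.single_le_sum (fun t _ => hdiagnn t) (Finset.mem_univ t)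
  -- real data
  set cs : Fin d → ℝ := fun t => (O₀ t t).re with hcs
  set q : Fin d × Fin d → ℝ := fun p => Complex.normSq (O₀ p.1 p.2) with hq
  set S : ℝ := ∑ t, (cs t)^2 with hSdef
  set A : Finset (Fin d × Fin d) := Finset.univ.filter (fun p : Fin d × Fin d => p.1 < p.2)
    with hA
  set Q : ℝ := ∑ p ∈ A, q p with hQ
  have hS0 : 0 ≤ S := Finset.sum_nonneg (fun t _ => sq_nonneg _)
  have hQ0 : 0 ≤ Q := Finset.sum_nonneg (fun p _ => Complex.normSq_nonneg _)
  have him0 : ∀ t, (O₀ t t).im = 0 := by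
    intro t
    exact Complex.conj_eq_iff_im.mp (hconj t t).symm
  -- RHS
  have hRHS : (Matrix.trace (O₀ * O₀)).re = S + 2 * Q := by
    have h1 : (Matrix.trace (O₀ * O₀)).re = ∑ p : Fin d × Fin d, q p := by
      rw [Matrix.trace]
      rw [show Matrix.diag (O₀ * O₀) = fun j => ∑ k, O₀ j k * O₀ k j from rfl]
      rw [Complex.re_sum, Fintype.sum_prod_type]
      refine Finset.sum_congr rfl (fun j _ => ?_)
      rw [Complex.re_sum]
      refine Finset.sum_congr rfl (fun k _ => ?_)
      rw [hconj j k, Complex.mul_conj]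
      simp [hq]
    have h2 := sum_split q (fun j k => by
      simp only [hq]
      rw [hconj j k]
      exact Complex.normSq_conj _)
    have h3 : ∑ t, q (t, t) = S := by
      refine Finset.sum_congr rfl (fun t _ => ?_)
      simp [hq, hcs, Complex.normSq_apply, him0 t, sq]
    rw [h1, h2, h3]
  -- diagonal (Pk) part
  have hT1 : (∑ t, (Matrix.trace (σ * Pk t)).re * ((Matrix.trace (o * Pk t)).re)^2)
      ≤ S / dR^2 := by
    have heq : ∀ t, ((Matrix.trace (o * Pk t)).re)^2 = (cs t)^2 / dR^2 := by
      intro t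
      rw [tr_Pk, ho_diag, re_div_nat, div_pow]
    calc ∑ t, (Matrix.trace (σ * Pk t)).re * ((Matrix.trace (o * Pk t)).re)^2
        ≤ ∑ t, ((Matrix.trace (o * Pk t)).re)^2 := by
          refine Finset.sum_le_sum (fun t _ => ?_)
          have h1 : (Matrix.trace (σ * Pk t)).re ≤ 1 := by rw [tr_Pk]; exact hdiag1 t
          have h2 : 0 ≤ ((Matrix.trace (o * Pk t)).re)^2 := sq_nonneg _
          nlinarith
      _ = S / dR^2 := by
          rw [Finset.sum_congr rfl (fun t _ => heq t), ← Finset.sum_div, hSdef]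
  -- counting sum for diagonal parts of pairs
  have hcount : ∑ p ∈ A, ((cs p.1)^2 + (cs p.2)^2) = (dR - 1) * S := by
    have h1 := sum_split (fun p => (cs p.1)^2 + (cs p.2)^2) (fun j k => by ring)
    have h2 : ∑ p : Fin d × Fin d, ((cs p.1)^2 + (cs p.2)^2) = 2 * dR * S := by
      rw [Fintype.sum_prod_type]
      simp only [Finset.sum_add_distrib, Finset.sum_const, Finset.card_univ,
        Fintype.card_fin, nsmul_eq_mul]
      rw [← Finset.mul_sum, ← hSdef, hdRdef]
      ring
    have h3 : ∑ t, ((cs t)^2 + (cs t)^2) = 2 * S := by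
      rw [Finset.sum_add_distrib, ← hSdef]; ring
    rw [h1, h3] at h2
    linarith
  -- pairwise pointwise bound
  have hpoint : ∀ p ∈ A,
      (Matrix.trace (σ * proj (phiP p.1 p.2))).re * ((Matrix.trace (o * proj (phiP p.1 p.2))).re)^2
      + (Matrix.trace (σ * proj (phiM p.1 p.2))).re * ((Matrix.trace (o * proj (phiM p.1 p.2))).re)^2
      + (Matrix.trace (σ * proj (psiP p.1 p.2))).re * ((Matrix.trace (o * proj (psiP p.1 p.2))).re)^2
      + (Matrix.trace (σ * proj (psiM p.1 p.2))).re * ((Matrix.trace (o * proj (psiM p.1 p.2))).re)^2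
      ≤ ((cs p.1 + cs p.2)^2) / dR^2 + 2 * q p := by
    rintro ⟨j, k⟩ hp
    simp only [hA, Finset.mem_filter, Finset.mem_univ, true_and] at hp
    have hjk : j ≠ k := ne_of_lt hp
    set x : ℝ := (O₀ j k).re with hx
    set y : ℝ := (O₀ j k).im with hy
    set a : ℝ := (cs j + cs k) / (2 * dR) with ha
    -- o-values
    have okj : o k j = (starRingEnd ℂ) (O₀ j k) := by rw [ho_off k j hjk.symm, hconj]
    have e1 : (Matrix.trace (o * proj (phiP j k))).re = a + x := by
      rw [tr_phiP, ho_diag, ho_diag, ho_off j k hjk, okj, re_div_two]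
      simp only [Complex.add_re, re_div_nat, Complex.conj_re, ← hx]
      rw [ha, hcs]
      field_simp
      ring
    have e2 : (Matrix.trace (o * proj (phiM j k))).re = a - x := by
      rw [tr_phiM, ho_diag, ho_diag, ho_off j k hjk, okj, re_div_two]
      simp only [Complex.add_re, Complex.sub_re, re_div_nat, Complex.conj_re, ← hx]
      rw [ha, hcs]
      field_simp
      ring
    have e3 : (Matrix.trace (o * proj (psiP j k))).re = a - y := by
      rw [tr_psiP, ho_diag, ho_diag, ho_off j k hjk, okj, re_div_two]
      simp only [Complex.add_re, Complex.sub_re, re_div_nat, Complex.mul_re,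
        Complex.I_re, Complex.I_im, Complex.conj_re, Complex.conj_im, ← hx, ← hy]
      rw [ha, hcs]
      field_simp
      ring
    have e4 : (Matrix.trace (o * proj (psiM j k))).re = a + y := by
      rw [tr_psiM, ho_diag, ho_diag, ho_off j k hjk, okj, re_div_two]
      simp only [Complex.add_re, Complex.sub_re, re_div_nat, Complex.mul_re,
        Complex.I_re, Complex.I_im, Complex.conj_re, Complex.conj_im, ← hx, ← hy]
      rw [ha, hcs]
      field_simp
      ring
    -- σ weights
    have w1 := hnn (phiP j k); have w2 := hnn (phiM j k)
    have w3 := hnn (psiP j k); have w4 := hnn (psiM j k)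
    have ws12 : (Matrix.trace (σ * proj (phiP j k))).re + (Matrix.trace (σ * proj (phiM j k))).re
        = (σ j j).re + (σ k k).re := by
      rw [tr_phiP, tr_phiM, re_div_two, re_div_two]
      simp only [Complex.add_re, Complex.sub_re]
      ring
    have ws34 : (Matrix.trace (σ * proj (psiP j k))).re + (Matrix.trace (σ * proj (psiM j k))).re
        = (σ j j).re + (σ k k).re := by
      rw [tr_psiP, tr_psiM, re_div_two, re_div_two]
      simp only [Complex.add_re, Complex.sub_re]
      ring
    have hp1 := hpair1 j k hjk
    have u1 : (Matrix.trace (σ * proj (phiP j k))).re ≤ 1 := by linarith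
    have u2 : (Matrix.trace (σ * proj (phiM j k))).re ≤ 1 := by linarith
    have u3 : (Matrix.trace (σ * proj (psiP j k))).re ≤ 1 := by linarith
    have u4 : (Matrix.trace (σ * proj (psiM j k))).re ≤ 1 := by linarith
    have key : (Matrix.trace (σ * proj (phiP j k))).re * ((Matrix.trace (o * proj (phiP j k))).re)^2
        + (Matrix.trace (σ * proj (phiM j k))).re * ((Matrix.trace (o * proj (phiM j k))).re)^2
        + (Matrix.trace (σ * proj (psiP j k))).re * ((Matrix.trace (o * proj (psiP j k))).re)^2
        + (Matrix.trace (σ * proj (psiM j k))).re * ((Matrix.trace (o * proj (psiM j k))).re)^2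
        ≤ (a + x)^2 + (a - x)^2 + (a - y)^2 + (a + y)^2 := by
      rw [e1, e2, e3, e4]
      have b1 := mul_le_of_le_one_left (sq_nonneg (a + x)) u1
      have b2 := mul_le_of_le_one_left (sq_nonneg (a - x)) u2
      have b3 := mul_le_of_le_one_left (sq_nonneg (a - y)) u3
      have b4 := mul_le_of_le_one_left (sq_nonneg (a + y)) u4
      linarith
    have hid : (a + x)^2 + (a - x)^2 + (a - y)^2 + (a + y)^2
        = ((cs j + cs k)^2) / dR^2 + 2 * q (j, k) := by
      have hns : q (j, k) = x^2 + y^2 := by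
        simp [hq, Complex.normSq_apply, ← hx, ← hy, sq]
      rw [hns, ha]
      field_simp
      ring
    calc _ ≤ (a + x)^2 + (a - x)^2 + (a - y)^2 + (a + y)^2 := key
      _ = _ := hid
  -- sum the pairwise bounds
  have hT2 : (∑ p ∈ A,
        ((Matrix.trace (σ * proj (phiP p.1 p.2))).re * ((Matrix.trace (o * proj (phiP p.1 p.2))).re)^2 + (Matrix.trace (σ * proj (phiM p.1 p.2))).re * ((Matrix.trace (o * proj (phiM p.1 p.2))).re)^2 + (Matrix.trace (σ * proj (psiP p.1 p.2))).re * ((Matrix.trace (o * proj (psiP p.1 p.2))).re)^2 + (Matrix.trace (σ * proj (psiM p.1 p.2))).re * ((Matrix.trace (o * proj (psiM p.1 p.2))).re)^2))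
      ≤ 2 * (dR - 1) * S / dR^2 + 2 * Q := by
    calc _ ≤ ∑ p ∈ A, (((cs p.1 + cs p.2)^2) / dR^2 + 2 * q p) :=
          Finset.sum_le_sum hpoint
      _ ≤ ∑ p ∈ A, (((cs p.1)^2 + (cs p.2)^2) * 2 / dR^2 + 2 * q p) := by
          refine Finset.sum_le_sum (fun p _ => ?_)
          have : (cs p.1 + cs p.2)^2 ≤ ((cs p.1)^2 + (cs p.2)^2) * 2 := by nlinarith [sq_nonneg (cs p.1 - cs p.2)]
          have hdd : (0:ℝ) < dR^2 := by positivity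
          gcongr
      _ = (∑ p ∈ A, ((cs p.1)^2 + (cs p.2)^2)) * 2 / dR^2 + 2 * Q := by
          rw [Finset.sum_add_distrib, ← Finset.sum_div, ← Finset.sum_mul, ← Finset.mul_sum, hQ]
      _ = 2 * (dR - 1) * S / dR^2 + 2 * Q := by
          rw [hcount]
          ring
  -- assemble
  rw [hRHS]
  have hmul1 : 4 * dR * (∑ t, (Matrix.trace (σ * Pk t)).re * ((Matrix.trace (o * Pk t)).re)^2)
      ≤ 4 * dR * (S / dR^2) := by
    have h4 : (0:ℝ) ≤ 4 * dR := by positivity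
    exact mul_le_mul_of_nonneg_left hT1 h4
  have hmul2 : 2 * dR * (∑ p ∈ A,
        ((Matrix.trace (σ * proj (phiP p.1 p.2))).re * ((Matrix.trace (o * proj (phiP p.1 p.2))).re)^2 + (Matrix.trace (σ * proj (phiM p.1 p.2))).re * ((Matrix.trace (o * proj (phiM p.1 p.2))).re)^2 + (Matrix.trace (σ * proj (psiP p.1 p.2))).re * ((Matrix.trace (o * proj (psiP p.1 p.2))).re)^2 + (Matrix.trace (σ * proj (psiM p.1 p.2))).re * ((Matrix.trace (o * proj (psiM p.1 p.2))).re)^2))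
      ≤ 2 * dR * (2 * (dR - 1) * S / dR^2 + 2 * Q) := by
    have h4 : (0:ℝ) ≤ 2 * dR := by positivity
    exact mul_le_mul_of_nonneg_left hT2 h4
  have hfin : 4 * dR * (S / dR^2) + 2 * dR * (2 * (dR - 1) * S / dR^2 + 2 * Q)
      ≤ 2 * dR * (S + 2 * Q) := by
    have h1 : 4 * dR * (S / dR^2) = 4 * S / dR := by field_simp
    have h2 : 2 * dR * (2 * (dR - 1) * S / dR^2) = 4 * (dR - 1) * S / dR := by field_simp; ring
    rw [h1, mul_add, h2]
    have h3 : 4 * S / dR + 4 * (dR - 1) * S / dR ≤ 2 * dR * S := by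
      rw [← add_div, div_le_iff₀ hdR0]
      nlinarith [mul_nonneg (mul_nonneg (by linarith : (0:ℝ) ≤ 2 * dR)
        (by linarith : (0:ℝ) ≤ dR - 2)) hS0]
    linarith
  linarith


end
end

section
/- Let O be a d×d Hermitian matrix with d ≥ 2 and O₀ = O − (tr(O)/d)I. Taking σ = I/d (the maximally mixed state), the DDB shadow variance at σ satisfies ‖O₀‖²_{I/d} ≤ 2·tr(O₀²). Explicitly: (4d/d)∑_k tr²(oP_k) + (2d/d)∑_{0≤j<k≤d−1}∑_±[tr²(oP^±_{jk}) + tr²(oQ^±_{jk})] ≤ 2·tr(O₀²), where o = O₀ − ((d−1)/d)∑_k tr(O₀P_k)P_k. -/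
open Matrix Complex BigOperators

noncomputable section

/-! Let `a_t = (O₀)_tt`. We have `tr(A P_t) = A_tt`, and for Hermitian `A` the four superposition
projectors on a pair `j < k` give `∑ tr²(A Π) = (A_jj + A_kk)² + 2|A_jk|²`. As `o` is `O₀` with its
diagonal divided by `d`, the left side is `4∑ a_t²/d² + 2∑_{j<k} ((a_j + a_k)²/d² + 2|O₀_jk|²)`,
while `tr(O₀²) = ∑ a_t² + 2∑_{j<k} |O₀_jk|²`. The off-diagonal terms agree exactly, and
`(a_j + a_k)² ≤ 2a_j² + 2a_k²` bounds the diagonal ones by `4∑ a_t²/d ≤ 2∑ a_t²` once `d ≥ 2`. -/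

open Finset ComplexConjugate

section PairSums

variable {α : Type*} [Fintype α] [LinearOrder α]

theorem sum_sum_eq_sum_diag_add_sum_lt {β : Type*} [AddCommMonoid β] (f : α → α → β) :
    ∑ i, ∑ j, f i j
      = ∑ i, f i i + ∑ p ∈ univ.filter (fun p : α × α => p.1 < p.2), (f p.1 p.2 + f p.2 p.1) := by
  have htri : ∀ i j, f i j = (if i = j then f i j else 0) + (if i < j then f i j else 0)
      + (if j < i then f i j else 0) := by
    intro i j
    rcases lt_trichotomy i j with h | rfl | h
    · simp [h, h.ne, h.not_gt]
    · simp
    · simp [h, h.ne', h.not_gt]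
  simp only [sum_add_distrib, sum_filter, Fintype.sum_prod_type]
  conv_lhs => enter [2, i, 2, j]; rw [htri i j]
  simp only [sum_add_distrib, sum_ite_eq, mem_univ, if_true]
  rw [add_assoc, sum_comm (f := fun i j => if j < i then f i j else 0)]

theorem sum_lt_sq_add_le (a : α → ℝ) :
    ∑ p ∈ univ.filter (fun p : α × α => p.1 < p.2), (a p.1 + a p.2) ^ 2
      ≤ 2 * (Fintype.card α - 1) * ∑ i, a i ^ 2 := by
  have hcount := sum_sum_eq_sum_diag_add_sum_lt fun i (_ : α) => a i ^ 2
  simp only [sum_const, card_univ, nsmul_eq_mul, ← mul_sum] at hcount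
  calc ∑ p ∈ univ.filter (fun p : α × α => p.1 < p.2), (a p.1 + a p.2) ^ 2
      ≤ ∑ p ∈ univ.filter (fun p : α × α => p.1 < p.2), 2 * (a p.1 ^ 2 + a p.2 ^ 2) :=
        sum_le_sum fun p _ => by nlinarith [sq_nonneg (a p.1 - a p.2)]
    _ = 2 * (Fintype.card α - 1) * ∑ i, a i ^ 2 := by rw [← mul_sum]; linarith

theorem two_mul_sum_sq_div_card_add_sum_lt_sq_div_card_le (hcard : 2 ≤ Fintype.card α)
    (a : α → ℝ) :
    2 * ∑ i, (a i / Fintype.card α) ^ 2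
      + ∑ p ∈ univ.filter (fun p : α × α => p.1 < p.2), ((a p.1 + a p.2) / Fintype.card α) ^ 2
      ≤ ∑ i, a i ^ 2 := by
  have hcard' : (2 : ℝ) ≤ Fintype.card α := by exact_mod_cast hcard
  have hS : 0 ≤ ∑ i, a i ^ 2 := sum_nonneg fun i _ => sq_nonneg (a i)
  have hpairs := sum_lt_sq_add_le a
  simp only [div_pow, ← sum_div]
  rw [← mul_div_assoc, ← add_div, div_le_iff₀ (by positivity)]
  nlinarith [mul_nonneg (mul_nonneg (Nat.cast_nonneg (Fintype.card α)) (sub_nonneg.2 hcard')) hS]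

end PairSums

namespace Matrix

variable {n : Type*}

theorem sub_smul_diagonal_diag_apply_self {R : Type*} [Ring R] [DecidableEq n]
    (A : Matrix n n R) (c : R) (i : n) : (A - c • diagonal A.diag) i i = (1 - c) * A i i := by
  simp [sub_mul]

theorem sub_smul_diagonal_diag_apply_of_ne {R : Type*} [Ring R] [DecidableEq n]
    (A : Matrix n n R) (c : R) {i j : n} (h : i ≠ j) : (A - c • diagonal A.diag) i j = A i j := by
  simp [h]

theorem IsHermitian.sub_trace_div_smul_one [Fintype n] [DecidableEq n] {A : Matrix n n ℂ}
    (hA : A.IsHermitian) (d : ℕ) : (A - (trace A / d) • (1 : Matrix n n ℂ)).IsHermitian := by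
  have htrace : IsSelfAdjoint (trace A) := by
    rw [IsSelfAdjoint, ← trace_conjTranspose, hA.eq]
  exact hA.sub (isHermitian_one.smul (htrace.div (IsSelfAdjoint.natCast d)))

theorem IsHermitian.sub_smul_diagonal_diag [DecidableEq n] {A : Matrix n n ℂ}
    (hA : A.IsHermitian) (c : ℝ) : (A - (c : ℂ) • diagonal A.diag).IsHermitian := by
  have hdiag : IsSelfAdjoint A.diag := funext fun i => hA.apply i i
  exact hA.sub ((isHermitian_diagonal_of_self_adjoint _ hdiag).smul (Complex.conj_ofReal c))

theorem IsHermitian.re_trace_mul_self [Fintype n] [LinearOrder n] {A : Matrix n n ℂ}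
    (hA : A.IsHermitian) :
    (trace (A * A)).re = ∑ i, (A i i).re ^ 2
      + 2 * ∑ p ∈ univ.filter (fun p : n × n => p.1 < p.2), normSq (A p.1 p.2) := by
  have hentry : ∀ i j, (A i j * A j i).re = normSq (A i j) := by
    intro i j
    rw [← hA.apply j i, Complex.star_def, Complex.mul_conj, Complex.ofReal_re]
  have hdiag : ∀ i, normSq (A i i) = (A i i).re ^ 2 := by
    intro i
    have him : (A i i).im = 0 := by simpa using (congrArg im (hA.coe_re_apply_self i)).symm
    rw [normSq_apply, him]
    ring
  have hswap : ∀ i j, normSq (A j i) = normSq (A i j) := by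
    intro i j
    rw [← hA.apply j i, Complex.star_def, normSq_conj]
  simp only [trace, diag, mul_apply, re_sum, hentry]
  rw [sum_sum_eq_sum_diag_add_sum_lt]
  simp only [hdiag, hswap, ← two_mul, mul_sum]

end Matrix

lemma ket_eq_single (d : ℕ) (t : Fin d) : ket d t = Pi.single t 1 := by
  funext i
  simp [ket, Pi.single_apply]

lemma Pk_eq_single {d : ℕ} (t : Fin d) : Pk t = single t t 1 := by
  rw [Pk, proj, ket_eq_single, single_eq_single_vecMulVec_single]
  simp

lemma trace_mul_Pk {d : ℕ} (A : Matrix (Fin d) (Fin d) ℂ) (t : Fin d) :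
    trace (A * Pk t) = A t t := by
  simp [Pk_eq_single, trace_mul_single]

lemma sum_smul_Pk {d : ℕ} (c : Fin d → ℂ) : ∑ t, c t • Pk t = diagonal c := by
  simp [Pk_eq_single, smul_single, sum_single_eq_diagonal]

def superpos {d : ℕ} (j k : Fin d) (z : ℂ) : Fin d → ℂ :=
  ((Real.sqrt 2 : ℝ) : ℂ)⁻¹ • (ket d j + z • ket d k)

lemma phiP_eq_superpos {d : ℕ} (j k : Fin d) : phiP j k = superpos j k 1 := by
  funext i
  simp [phiP, superpos, div_eq_inv_mul]

lemma phiM_eq_superpos {d : ℕ} (j k : Fin d) : phiM j k = superpos j k (-1) := by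
  funext i
  simp [phiM, superpos, div_eq_inv_mul, sub_eq_add_neg]

lemma psiP_eq_superpos {d : ℕ} (j k : Fin d) : psiP j k = superpos j k I := by
  funext i
  simp [psiP, superpos, div_eq_inv_mul]

lemma psiM_eq_superpos {d : ℕ} (j k : Fin d) : psiM j k = superpos j k (-I) := by
  funext i
  simp [psiM, superpos, div_eq_inv_mul, sub_eq_add_neg]

lemma trace_mul_proj_superpos {d : ℕ} (A : Matrix (Fin d) (Fin d) ℂ) (j k : Fin d) (z : ℂ) :
    trace (A * proj (superpos j k z))
      = (A j j + z * A j k + conj z * A k j + z * conj z * A k k) / 2 := by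
  have hsqrt : ((Real.sqrt 2 : ℝ) : ℂ)⁻¹ * ((Real.sqrt 2 : ℝ) : ℂ)⁻¹ = 2⁻¹ := by
    rw [← mul_inv, ← ofReal_mul, Real.mul_self_sqrt zero_le_two, ofReal_ofNat]
  rw [proj, mul_vecMulVec, trace_vecMulVec, superpos]
  simp [ket_eq_single, mulVec_add, mulVec_smul, dotProduct_add, star_smul]
  linear_combination (A j j + z * A j k + conj z * A k j + z * conj z * A k k) * hsqrt

lemma Matrix.IsHermitian.sum_sq_re_trace_mul_proj_phi_psi {d : ℕ}
    {A : Matrix (Fin d) (Fin d) ℂ} (hA : A.IsHermitian) (j k : Fin d) :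
    (trace (A * proj (phiP j k))).re ^ 2 + (trace (A * proj (phiM j k))).re ^ 2
      + (trace (A * proj (psiP j k))).re ^ 2 + (trace (A * proj (psiM j k))).re ^ 2
      = ((A j j).re + (A k k).re) ^ 2 + 2 * normSq (A j k) := by
  simp only [phiP_eq_superpos, phiM_eq_superpos, psiP_eq_superpos, psiM_eq_superpos,
    trace_mul_proj_superpos, ← hA.apply j k]
  simp [normSq_apply]
  ring

theorem stmt11 (d : ℕ) (hd : 2 ≤ d) (O O₀ o : Matrix (Fin d) (Fin d) ℂ)
    (hO : O.IsHermitian)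
    (hO₀ : O₀ = O - (Matrix.trace O / d) • (1 : Matrix (Fin d) (Fin d) ℂ))
    (ho : o = O₀ - (((d : ℂ) - 1) / d) • ∑ t, (Matrix.trace (O₀ * Pk t)) • Pk t) :
    4 * (∑ t, ((Matrix.trace (o * Pk t)).re)^2)
      + 2 * (∑ p ∈ Finset.univ.filter (fun p : Fin d × Fin d => p.1 < p.2), (((Matrix.trace (o * proj (phiP p.1 p.2))).re)^2 + ((Matrix.trace (o * proj (phiM p.1 p.2))).re)^2 + ((Matrix.trace (o * proj (psiP p.1 p.2))).re)^2 + ((Matrix.trace (o * proj (psiM p.1 p.2))).re)^2))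
    ≤ 2 * (Matrix.trace (O₀ * O₀)).re := by
  have hO₀H : O₀.IsHermitian := hO₀ ▸ hO.sub_trace_div_smul_one d
  have ho' : o = O₀ - (((d - 1) / d : ℝ) : ℂ) • diagonal O₀.diag := by
    simp only [ho, trace_mul_Pk, sum_smul_Pk]
    push_cast
    rfl
  have hoH : o.IsHermitian := ho' ▸ hO₀H.sub_smul_diagonal_diag _
  have ho_diag : ∀ t, (o t t).re = (O₀ t t).re / d := by
    intro t
    rw [ho', sub_smul_diagonal_diag_apply_self, ← ofReal_one, ← ofReal_sub, re_ofReal_mul]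
    field_simp
    ring
  have hpair : ∀ p ∈ univ.filter (fun p : Fin d × Fin d => p.1 < p.2),
      (trace (o * proj (phiP p.1 p.2))).re ^ 2 + (trace (o * proj (phiM p.1 p.2))).re ^ 2
        + (trace (o * proj (psiP p.1 p.2))).re ^ 2 + (trace (o * proj (psiM p.1 p.2))).re ^ 2
      = (((O₀ p.1 p.1).re + (O₀ p.2 p.2).re) / d) ^ 2 + 2 * normSq (O₀ p.1 p.2) := by
    intro p hp
    rw [hoH.sum_sq_re_trace_mul_proj_phi_psi, ho_diag, ho_diag, ← add_div, ho',
      sub_smul_diagonal_diag_apply_of_ne _ _ (mem_filter.1 hp).2.ne]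
  have hdiag_part := two_mul_sum_sq_div_card_add_sum_lt_sq_div_card_le
    (by rwa [Fintype.card_fin]) fun t : Fin d => (O₀ t t).re
  rw [Fintype.card_fin] at hdiag_part
  rw [sum_congr rfl hpair, sum_add_distrib, hO₀H.re_trace_mul_self]
  simp only [trace_mul_Pk, ho_diag, ← mul_sum]
  linarith

end
end
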